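/- arXiv:2411.19540 — 2 statements merged into one kernel-verified Lean document; each statement's English description precedes it below -/
import Mathlib

section
/- On the torus 𝕋² with coordinates (x,y), let g : 𝕋 → ℝ be a smooth function vanishing to infinite order at a single point x* and nonzero elsewhere, and let X₁ = ∂_x, X₂ = g(x)∂_y. Then the Hörmander condition holds at every point with x ≠ x* and fails at every point of the circle {x = x*}, yet the circle {x = x*} is not a characteristic submanifold (since X₁ is transversal to it). -/
noncomputable def lieB {V : Type*} [NormedAddCommGroup V] [NormedSpace ℝ V] (X Y : V → V) : V → V :=
  fun p => fderiv ℝ Y p (X p) - fderiv ℝ X p (Y p)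

noncomputable def iterBracket {V : Type*} [NormedAddCommGroup V] [NormedSpace ℝ V] {r : ℕ}
    (X : Fin r → V → V) : List (Fin r) → V → V
  | [] => fun _ => 0
  | [i] => X i
  | i :: l => lieB (X i) (iterBracket X l)

/-- Span at `p` of the values of all iterated Lie brackets of the family `X`. -/
noncomputable def hormanderSpan {V : Type*} [NormedAddCommGroup V] [NormedSpace ℝ V] {r : ℕ}
    (X : Fin r → V → V) (p : V) : Submodule ℝ V :=
  Submodule.span ℝ {v | ∃ l : List (Fin r), l ≠ [] ∧ iterBracket X l p = v}

def ZariskiTangent {V : Type*} [NormedAddCommGroup V] [NormedSpace ℝ V]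
    (A : Set V) (p v : V) : Prop :=
  ∀ f : V → ℝ, ContDiff ℝ 1 f → (∀ x ∈ A, f x = 0) → fderiv ℝ f p v = 0

def charSet {V : Type*} [NormedAddCommGroup V] [NormedSpace ℝ V] {r : ℕ}
    (X : Fin r → V → V) (A : Set V) : Set V :=
  {p ∈ A | ∀ j, ZariskiTangent A p (X j p)}

lemma fderiv_pair_apply (c : ℝ) (h : ℝ → ℝ) (hh : Differentiable ℝ h) (p v : ℝ × ℝ) :
    fderiv ℝ (fun q : ℝ × ℝ => (c, h q.1)) p v = (0, v.1 * deriv h p.1) := by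
  have h1 : HasFDerivAt (fun q : ℝ × ℝ => (c, h q.1))
      ((0 : ℝ × ℝ →L[ℝ] ℝ).prod ((fderiv ℝ h p.1).comp (ContinuousLinearMap.fst ℝ ℝ ℝ))) p :=
    HasFDerivAt.prodMk (hasFDerivAt_const c p) ((hh p.1).hasFDerivAt.comp p (hasFDerivAt_fst))
  rw [h1.fderiv]
  have : fderiv ℝ h p.1 v.1 = v.1 * deriv h p.1 := by
    rw [show v.1 = v.1 • (1 : ℝ) by simp, map_smul, fderiv_apply_one_eq_deriv]
    simp [smul_eq_mul]
  simp [this]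

lemma iteratedDeriv_cmul (c : ℝ) (f : ℝ → ℝ) (hf : ContDiff ℝ (⊤ : ℕ∞) f) (k : ℕ) (x : ℝ) :
    iteratedDeriv k (fun y => c * f y) x = c * iteratedDeriv k f x := by
  rw [← iteratedDerivWithin_univ, ← iteratedDerivWithin_univ]
  exact iteratedDerivWithin_const_mul (Set.mem_univ x) uniqueDiffOn_univ c
    ((hf.of_le (by exact_mod_cast le_top)).contDiffWithinAt)

theorem hormander_fails_on_noncharacteristic_circle
    (g : ℝ → ℝ) (xs : ℝ) (hg : ContDiff ℝ (⊤ : ℕ∞) g) (hper : ∀ x, g (x + 1) = g x)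
    (hflat : ∀ k : ℕ, iteratedDeriv k g xs = 0)
    (hnz : ∀ x : ℝ, (¬ ∃ m : ℤ, x = xs + m) → g x ≠ 0)
    (X : Fin 2 → ℝ × ℝ → ℝ × ℝ)
    (hX0 : X 0 = fun _ => ((1 : ℝ), (0 : ℝ)))
    (hX1 : X 1 = fun p => ((0 : ℝ), g p.1)) :
    (∀ p : ℝ × ℝ, (¬ ∃ m : ℤ, p.1 = xs + m) → hormanderSpan X p = ⊤) ∧
    (∀ p : ℝ × ℝ, p.1 = xs → hormanderSpan X p ≠ ⊤) ∧
    charSet X {q : ℝ × ℝ | q.1 = xs} = ∅ := by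
  have hg2 : ContDiff ℝ (⊤ : ℕ∞) g := hg.of_le (by simp)
  have hg2' : ContDiff ℝ (⊤ : ℕ∞) (deriv g) := (contDiff_infty_iff_deriv.mp hg2).2
  -- structural lemma: every nonempty iterated bracket is of the form (c, h x) with h smooth
  -- and flat at xs
  have key : ∀ l : List (Fin 2), l ≠ [] → ∃ (c : ℝ) (h : ℝ → ℝ), ContDiff ℝ (⊤ : ℕ∞) h ∧
      (∀ k : ℕ, iteratedDeriv k h xs = 0) ∧ iterBracket X l = fun p => (c, h p.1) := by
    intro l hl
    induction l with
    | nil => exact absurd rfl hl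
    | cons i t ih =>
      match t with
      | [] =>
        have hi : i = 0 ∨ i = 1 := by omega
        rcases hi with rfl | rfl
        · exact ⟨1, fun _ => 0, contDiff_const, fun k => by simp [iteratedDeriv],
            by simp [iterBracket, hX0]⟩
        · exact ⟨0, g, hg2, hflat, by simp [iterBracket, hX1]⟩
      | j :: t' =>
        obtain ⟨c, h, hh, hhflat, heq⟩ := ih (List.cons_ne_nil j t')
        have hhd : Differentiable ℝ h := hh.differentiable (by simp)
        have hh' : ContDiff ℝ (⊤ : ℕ∞) (deriv h) := (contDiff_infty_iff_deriv.mp hh).2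
        have hbr : iterBracket X (i :: j :: t') = lieB (X i) (iterBracket X (j :: t')) := rfl
        have hi : i = 0 ∨ i = 1 := by omega
        rcases hi with rfl | rfl
        · -- bracket with ∂ₓ : gives (0, deriv h x)
          refine ⟨0, deriv h, hh', ?_, ?_⟩
          · intro k; rw [← iteratedDeriv_succ']; exact hhflat (k + 1)
          · rw [hbr, heq]
            funext p
            simp only [lieB, hX0]
            rw [fderiv_pair_apply c h hhd, fderiv_fun_const]
            simp
        · -- bracket with g ∂_y : gives (0, -(c * deriv g x))
          refine ⟨0, fun x => -(c * deriv g x), (contDiff_const.mul hg2').neg, ?_, ?_⟩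
          · intro k
            rw [show (fun x => -(c * deriv g x)) = fun x => -((fun y => c * deriv g y) x) from
              rfl, iteratedDeriv_fun_neg, iteratedDeriv_cmul c (deriv g) hg2' k xs,
              ← iteratedDeriv_succ', hflat (k + 1)]
            ring
          · rw [hbr, heq]
            funext p
            simp only [lieB, hX1]
            rw [fderiv_pair_apply c h hhd, fderiv_pair_apply 0 g (hg2.differentiable
              (by simp))]
            simp
  refine ⟨?_, ?_, ?_⟩
  · -- Hörmander holds off the orbit of xs
    intro p hp
    have hgp : g p.1 ≠ 0 := hnz p.1 hp
    have h1 : ((1 : ℝ), (0 : ℝ)) ∈ hormanderSpan X p :=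
      Submodule.subset_span ⟨[0], by simp, by simp [iterBracket, hX0]⟩
    have h2 : ((0 : ℝ), g p.1) ∈ hormanderSpan X p :=
      Submodule.subset_span ⟨[1], by simp, by simp [iterBracket, hX1]⟩
    rw [Submodule.eq_top_iff']
    intro v
    have : v = v.1 • ((1 : ℝ), (0 : ℝ)) + (v.2 / g p.1) • ((0 : ℝ), g p.1) := by
      ext <;> simp [div_mul_cancel₀ _ hgp]
    rw [this]
    exact Submodule.add_mem _ (Submodule.smul_mem _ _ h1) (Submodule.smul_mem _ _ h2)
  · -- Hörmander fails on the circle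
    intro p hp htop
    have hle : hormanderSpan X p ≤ Submodule.span ℝ {((1 : ℝ), (0 : ℝ))} := by
      rw [hormanderSpan, Submodule.span_le]
      rintro v ⟨l, hl, rfl⟩
      obtain ⟨c, h, _, hhflat, heq⟩ := key l hl
      simp only [heq]
      have : (c, h p.1) = c • ((1 : ℝ), (0 : ℝ)) := by
        have hz : h xs = 0 := by simpa [iteratedDeriv] using hhflat 0
        ext <;> simp [hp, hz]
      rw [this]
      exact Submodule.smul_mem _ _ (Submodule.mem_span_singleton_self _)
    rw [htop] at hle
    have : ((0 : ℝ), (1 : ℝ)) ∈ Submodule.span ℝ {((1 : ℝ), (0 : ℝ))} :=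
      hle Submodule.mem_top
    rw [Submodule.mem_span_singleton] at this
    obtain ⟨a, ha⟩ := this
    have := congrArg Prod.snd ha
    simp at this
  · -- the circle has no characteristic points
    rw [Set.eq_empty_iff_forall_notMem]
    rintro p ⟨hpA, htan⟩
    have hf : ContDiff ℝ 1 (fun q : ℝ × ℝ => q.1 - xs) :=
      (contDiff_fst.sub contDiff_const : ContDiff ℝ 1 _)
    have h0 := htan 0 (fun q : ℝ × ℝ => q.1 - xs) hf (fun x hx => by
      simpa using sub_eq_zero_of_eq hx)
    have hd : fderiv ℝ (fun q : ℝ × ℝ => q.1 - xs) p =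
        (ContinuousLinearMap.fst ℝ ℝ ℝ) := by
      have : HasFDerivAt (fun q : ℝ × ℝ => q.1 - xs)
          (ContinuousLinearMap.fst ℝ ℝ ℝ) p := hasFDerivAt_fst.sub_const xs
      exact this.fderiv
    rw [hd, hX0] at h0
    simp at h0
end

section
/- On ℝ² with vector fields X₁ = e^{-1/y²}∂_x (extended by 0 at y=0) and X₂ = e^{-1/x²}∂_y (extended by 0 at x=0), the degeneration locus (where the Hörmander condition fails) is Z₀ = {x=0} ∪ {y=0}, the characteristic set of Z₀ is Z₁ = {(0,0)}, and char(Z₁) = Z₁, so the chain of iterated characteristic sets stabilizes at the origin. -/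
/-- The flat function `t ↦ e^{-1/t²}`, extended by `0` at `t = 0`. -/
noncomputable def flatExp (t : ℝ) : ℝ := if t = 0 then 0 else Real.exp (-(1 / t ^ 2))

open Set Topology
open scoped ContDiff

section Flat

variable {E F G : Type*} [NormedAddCommGroup E] [NormedSpace ℝ E]
  [NormedAddCommGroup F] [NormedSpace ℝ F] [NormedAddCommGroup G] [NormedSpace ℝ G]

def FlatAt (f : E → F) (p : E) : Prop :=
  ∀ n : ℕ, iteratedFDeriv ℝ n f p = 0

theorem flatAt_zero (p : E) : FlatAt (fun _ : E => (0 : F)) p := fun n => by simp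

theorem FlatAt.apply_eq_zero {f : E → F} {p : E} (h : FlatAt f p) : f p = 0 := by
  rw [← norm_eq_zero, ← norm_iteratedFDeriv_zero (𝕜 := ℝ), h 0, norm_zero]

theorem flatAt_of_mem_closure {f : E → F} {U : Set E} (hf : ContDiff ℝ ∞ f) (hU : IsOpen U)
    (hfU : EqOn f 0 U) {p : E} (hp : p ∈ closure U) : FlatAt f p := by
  intro n
  have hzero : EqOn (iteratedFDeriv ℝ n f) 0 U := fun x hx => by
    have hloc : f =ᶠ[𝓝 x] fun _ => 0 := hfU.eventuallyEq_of_mem (hU.mem_nhds hx)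
    simpa using (hloc.iteratedFDeriv ℝ n).eq_of_nhds
  exact hzero.closure (hf.continuous_iteratedFDeriv (mod_cast le_top)) continuous_const hp

theorem FlatAt.comp {g : F → G} {f : E → F} {p : E} (hg : ContDiff ℝ ∞ g) (hf : ContDiff ℝ ∞ f)
    (h : FlatAt g (f p)) : FlatAt (g ∘ f) p := by
  intro n
  set D : ℝ := 1 + ∑ i ∈ Finset.range (n + 1), ‖iteratedFDeriv ℝ i f p‖
  have hsum : 0 ≤ ∑ i ∈ Finset.range (n + 1), ‖iteratedFDeriv ℝ i f p‖ :=
    Finset.sum_nonneg fun i _ => norm_nonneg _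
  have hD : ∀ i, 1 ≤ i → i ≤ n → ‖iteratedFDeriv ℝ i f p‖ ≤ D ^ i := fun i hi hin =>
    calc ‖iteratedFDeriv ℝ i f p‖ ≤ ∑ j ∈ Finset.range (n + 1), ‖iteratedFDeriv ℝ j f p‖ :=
          Finset.single_le_sum (f := fun j => ‖iteratedFDeriv ℝ j f p‖)
            (fun j _ => norm_nonneg _) (Finset.mem_range.2 (Nat.lt_succ_of_le hin))
      _ ≤ D := by linarith
      _ ≤ D ^ i := le_self_pow₀ (by linarith) (by omega)
  have hC : ∀ i, i ≤ n → ‖iteratedFDeriv ℝ i g (f p)‖ ≤ 0 := fun i _ => by simp [h i]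
  have := norm_iteratedFDeriv_comp_le hg hf (mod_cast le_top) p hC hD
  rw [mul_zero, zero_mul] at this
  exact norm_le_zero_iff.mp this

theorem FlatAt.fderiv {f : E → F} {p : E} (h : FlatAt f p) : FlatAt (fderiv ℝ f) p := fun n => by
  rw [← norm_eq_zero, norm_iteratedFDeriv_fderiv, h (n + 1), norm_zero]

theorem FlatAt.sub {f g : E → F} {p : E} (hf : ContDiff ℝ ∞ f) (hg : ContDiff ℝ ∞ g)
    (hfp : FlatAt f p) (hgp : FlatAt g p) : FlatAt (f - g) p := fun n => by
  rw [iteratedFDeriv_sub_apply (hf.of_le (mod_cast le_top)).contDiffAt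
    (hg.of_le (mod_cast le_top)).contDiffAt, hfp n, hgp n, sub_zero]

theorem FlatAt.clm_apply {f : E → F →L[ℝ] G} {g : E → F} {p : E} (hf : ContDiff ℝ ∞ f)
    (hg : ContDiff ℝ ∞ g) (h : FlatAt f p) : FlatAt (fun q => f q (g q)) p := fun n => by
  refine norm_le_zero_iff.mp ((norm_iteratedFDeriv_clm_apply hf hg p (mod_cast le_top)).trans ?_)
  exact (Finset.sum_eq_zero fun i _ => by simp [h i]).le

end Flat

section Hormander

variable {V F : Type*} [NormedAddCommGroup V] [NormedSpace ℝ V]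
  [NormedAddCommGroup F] [NormedSpace ℝ F]

theorem contDiff_lieB {X Y : V → V} (hX : ContDiff ℝ ∞ X) (hY : ContDiff ℝ ∞ Y) :
    ContDiff ℝ ∞ (lieB X Y) :=
  ((hY.fderiv_right (mod_cast le_top)).clm_apply hX).sub
    ((hX.fderiv_right (mod_cast le_top)).clm_apply hY)

theorem flatAt_comp_lieB {X Y : V → V} {L : V →L[ℝ] F} {p : V} (hX : ContDiff ℝ ∞ X)
    (hY : ContDiff ℝ ∞ Y) (hXL : FlatAt (L ∘ X) p) (hYL : FlatAt (L ∘ Y) p) :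
    FlatAt (L ∘ lieB X Y) p := by
  have hLX : ContDiff ℝ ∞ (L ∘ X) := L.contDiff.comp hX
  have hLY : ContDiff ℝ ∞ (L ∘ Y) := L.contDiff.comp hY
  have hdLX := hLX.fderiv_right (m := ∞) (mod_cast le_top)
  have hdLY := hLY.fderiv_right (m := ∞) (mod_cast le_top)
  have hfderiv {Z : V → V} (hZ : ContDiff ℝ ∞ Z) (q : V) :
      fderiv ℝ (L ∘ Z) q = L.comp (fderiv ℝ Z q) := by
    rw [fderiv_comp q L.differentiableAt (hZ.differentiable (by simp) q), L.fderiv]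
  have hbracket : L ∘ lieB X Y =
      (fun q => fderiv ℝ (L ∘ Y) q (X q)) - fun q => fderiv ℝ (L ∘ X) q (Y q) := by
    ext q
    simp [lieB, hfderiv hX, hfderiv hY]
  rw [hbracket]
  exact FlatAt.sub (hdLY.clm_apply hX) (hdLX.clm_apply hY) (hYL.fderiv.clm_apply hdLY hX)
    (hXL.fderiv.clm_apply hdLX hY)

theorem iterBracket_mem {r : ℕ} {C : Set (V → V)} (hC : ∀ X ∈ C, ∀ Y ∈ C, lieB X Y ∈ C)
    {X : Fin r → V → V} (hX : ∀ i, X i ∈ C) : ∀ l ≠ [], iterBracket X l ∈ C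
  | [i], _ => hX i
  | i :: j :: l, _ => hC _ (hX i) _ (iterBracket_mem hC hX (j :: l) (List.cons_ne_nil j l))

theorem apply_mem_hormanderSpan {r : ℕ} (X : Fin r → V → V) (i : Fin r) (p : V) :
    X i p ∈ hormanderSpan X p :=
  Submodule.subset_span ⟨[i], List.cons_ne_nil i [], rfl⟩

theorem hormanderSpan_ne_top_of_flatAt {r : ℕ} {X : Fin r → V → V} {L : V →L[ℝ] F} {p : V}
    (hL : L ≠ 0) (hX : ∀ i, ContDiff ℝ ∞ (X i)) (hXL : ∀ i, FlatAt (L ∘ X i) p) :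
    hormanderSpan X p ≠ ⊤ := by
  have hle : hormanderSpan X p ≤ LinearMap.ker (L : V →ₗ[ℝ] F) := by
    rw [hormanderSpan, Submodule.span_le]
    rintro _ ⟨l, hl, rfl⟩
    have hmem := iterBracket_mem (C := {Y | ContDiff ℝ ∞ Y ∧ FlatAt (L ∘ Y) p})
      (fun X hX Y hY => ⟨contDiff_lieB hX.1 hY.1, flatAt_comp_lieB hX.1 hY.1 hX.2 hY.2⟩)
      (fun i => ⟨hX i, hXL i⟩) l hl
    exact hmem.2.apply_eq_zero
  intro htop
  refine hL (ContinuousLinearMap.ext fun v => ?_)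
  exact hle (htop ▸ Submodule.mem_top : v ∈ hormanderSpan X p)

theorem charSet_subset {r : ℕ} (X : Fin r → V → V) (A : Set V) : charSet X A ⊆ A :=
  fun _ hp => hp.1

theorem mem_charSet_of_forall_eq_zero {r : ℕ} {X : Fin r → V → V} {A : Set V} {p : V}
    (hpA : p ∈ A) (hX : ∀ j, X j p = 0) : p ∈ charSet X A :=
  ⟨hpA, fun j f _ _ => by rw [hX j, map_zero]⟩

theorem charSet_singleton_of_forall_eq_zero {r : ℕ} {X : Fin r → V → V} {p : V}
    (hX : ∀ j, X j p = 0) : charSet X {p} = {p} :=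
  (charSet_subset X {p}).antisymm (singleton_subset_iff.2 (mem_charSet_of_forall_eq_zero rfl hX))

end Hormander

theorem flatExp_eq_expNegInvGlue_comp_sq : flatExp = expNegInvGlue ∘ fun t => t ^ 2 := by
  funext t
  by_cases ht : t = 0
  · simp [flatExp, ht]
  · have ht2 : 0 < t ^ 2 := by positivity
    simp [flatExp, expNegInvGlue, ht, not_le.2 ht2]

theorem contDiff_flatExp : ContDiff ℝ ∞ flatExp := by
  rw [flatExp_eq_expNegInvGlue_comp_sq]
  exact expNegInvGlue.contDiff.comp (contDiff_id.pow 2)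

@[simp] theorem flatExp_zero : flatExp 0 = 0 := if_pos rfl

theorem flatExp_ne_zero {t : ℝ} (ht : t ≠ 0) : flatExp t ≠ 0 := by
  simp [flatExp, ht, Real.exp_ne_zero]

theorem flatAt_expNegInvGlue_zero : FlatAt expNegInvGlue 0 :=
  flatAt_of_mem_closure expNegInvGlue.contDiff isOpen_Iio
    (fun _ hx => expNegInvGlue.zero_of_nonpos (le_of_lt hx)) (by simp)

theorem flatAt_flatExp_zero : FlatAt flatExp 0 := by
  rw [flatExp_eq_expNegInvGlue_comp_sq]
  exact FlatAt.comp expNegInvGlue.contDiff (contDiff_id.pow 2)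
    (by simpa using flatAt_expNegInvGlue_zero)

noncomputable def flatFields : Fin 2 → ℝ × ℝ → ℝ × ℝ :=
  ![fun p => (flatExp p.2, 0), fun p => (0, flatExp p.1)]

theorem contDiff_flatFields (i : Fin 2) : ContDiff ℝ ∞ (flatFields i) := by
  fin_cases i
  · exact (contDiff_flatExp.comp contDiff_snd).prodMk contDiff_const
  · exact contDiff_const.prodMk (contDiff_flatExp.comp contDiff_fst)

theorem flatFields_apply_zero (i : Fin 2) : flatFields i 0 = 0 := by
  fin_cases i <;> simp [flatFields]

theorem hormanderSpan_flatFields_ne_top_iff {p : ℝ × ℝ} :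
    hormanderSpan flatFields p ≠ ⊤ ↔ p.1 = 0 ∨ p.2 = 0 := by
  constructor
  · contrapose!
    rintro ⟨h1, h2⟩
    rw [Submodule.eq_top_iff']
    intro w
    have hw : w = (w.1 / flatExp p.2) • flatFields 0 p + (w.2 / flatExp p.1) • flatFields 1 p := by
      ext <;> simp [flatFields, flatExp_ne_zero, h1, h2]
    rw [hw]
    exact add_mem (Submodule.smul_mem _ _ (apply_mem_hormanderSpan _ 0 p))
      (Submodule.smul_mem _ _ (apply_mem_hormanderSpan _ 1 p))
  · rintro (h | h)
    · refine hormanderSpan_ne_top_of_flatAt (L := ContinuousLinearMap.snd ℝ ℝ ℝ)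
        (fun hL => by simpa using congrArg (· (0, 1)) hL) contDiff_flatFields fun i => ?_
      fin_cases i
      · exact flatAt_zero p
      · exact (FlatAt.comp contDiff_flatExp contDiff_fst (by simpa [h] using flatAt_flatExp_zero) :
          FlatAt (flatExp ∘ Prod.fst) p)
    · refine hormanderSpan_ne_top_of_flatAt (L := ContinuousLinearMap.fst ℝ ℝ ℝ)
        (fun hL => by simpa using congrArg (· (1, 0)) hL) contDiff_flatFields fun i => ?_
      fin_cases i
      · exact (FlatAt.comp contDiff_flatExp contDiff_snd (by simpa [h] using flatAt_flatExp_zero) :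
          FlatAt (flatExp ∘ Prod.snd) p)
      · exact flatAt_zero p

theorem fderiv_fst_mul_snd (p v : ℝ × ℝ) :
    fderiv ℝ (fun q : ℝ × ℝ => q.1 * q.2) p v = p.1 * v.2 + p.2 * v.1 := by
  rw [(hasFDerivAt_fst.fun_mul hasFDerivAt_snd).fderiv]
  simp [smul_eq_mul]

theorem charSet_flatFields_axes : charSet flatFields {p : ℝ × ℝ | p.1 = 0 ∨ p.2 = 0} = {0} := by
  refine subset_antisymm (fun p ⟨_, htan⟩ => ?_)
    (singleton_subset_iff.2 (mem_charSet_of_forall_eq_zero (by simp) flatFields_apply_zero))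
  have hxy : ∀ j, fderiv ℝ (fun q : ℝ × ℝ => q.1 * q.2) p (flatFields j p) = 0 := fun j =>
    htan j _ (contDiff_fst.mul contDiff_snd) (by rintro q (hq | hq) <;> simp [hq])
  have h1 : p.1 * flatExp p.1 = 0 := by simpa [fderiv_fst_mul_snd, flatFields] using hxy 1
  have h2 : p.2 * flatExp p.2 = 0 := by simpa [fderiv_fst_mul_snd, flatFields] using hxy 0
  have hx : p.1 = 0 := by_contra fun hx => mul_ne_zero hx (flatExp_ne_zero hx) h1
  have hy : p.2 = 0 := by_contra fun hy => mul_ne_zero hy (flatExp_ne_zero hy) h2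
  exact Prod.ext hx hy

/-- on `ℝ²`, with `X₁ = e^{-1/y²} ∂ₓ` and `X₂ = e^{-1/x²} ∂_y`, the
degeneration locus is `Z₀ = {x = 0} ∪ {y = 0}`, its characteristic set is
`Z₁ = {(0,0)}`, and `char(Z₁) = Z₁`: the chain of iterated characteristic sets
stabilizes at the origin. -/
theorem iterated_char_of_two_flat_fields
    (X : Fin 2 → ℝ × ℝ → ℝ × ℝ)
    (hX0 : X 0 = fun p => (flatExp p.2, (0 : ℝ)))
    (hX1 : X 1 = fun p => ((0 : ℝ), flatExp p.1)) :
    {p : ℝ × ℝ | hormanderSpan X p ≠ ⊤} = {p : ℝ × ℝ | p.1 = 0 ∨ p.2 = 0} ∧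
    charSet X {p : ℝ × ℝ | p.1 = 0 ∨ p.2 = 0} = {(0, 0)} ∧
    charSet X {((0 : ℝ), (0 : ℝ))} = {(0, 0)} := by
  obtain rfl : X = flatFields := funext (Fin.forall_fin_two.2 ⟨hX0, hX1⟩)
  exact ⟨ext fun _ => hormanderSpan_flatFields_ne_top_iff, charSet_flatFields_axes,
    charSet_singleton_of_forall_eq_zero flatFields_apply_zero⟩
end
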